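/- Let μ be any probability measure on {−1,1}^n and let μ_t be defined recursively by μ_0 = μ, μ_t = μ_{t−1} ∘ μ_{t−1}, where (μ∘ν)(σ) := 2^{−n} Σ_{A⊆[n]} (μ_A ⊗ ν_{A^c})(σ). Then for every t ∈ ℕ, μ_t = N^{−n} Σ (μ_{A_1} ⊗ … ⊗ μ_{A_N}), where N = 2^t and the sum runs over all ordered partitions (A_1,…,A_N) of [n] into N (possibly empty) disjoint sets. -/

import Mathlib

open MeasureTheory
open scoped ENNReal

/-- The Boolean cube `{−1,1}^n`. -/
abbrev Cube (n : ℕ) := Fin n → ({-1, 1} : Set ℤ)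

/-- The recombination `μ_A ⊗ ν_{A^c}`: the law of the configuration which agrees with a
`μ`-sample on `A` and with an independent `ν`-sample on `A^c`. -/
noncomputable def recomb (n : ℕ) (A : Finset (Fin n)) (μ ν : Measure (Cube n)) :
    Measure (Cube n) :=
  Measure.map (fun p : Cube n × Cube n => fun i => if i ∈ A then p.1 i else p.2 i) (μ.prod ν)

/-- The collision product `μ∘ν = 2^{−n} Σ_{A⊆[n]} μ_A ⊗ ν_{A^c}`. -/
noncomputable def collision (n : ℕ) (μ ν : Measure (Cube n)) : Measure (Cube n) :=
  ((2 : ℝ≥0∞) ^ n)⁻¹ • ∑ A : Finset (Fin n), recomb n A μ ν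

/-- The discrete-time nonlinear recombination dynamics `μ_0 = μ`, `μ_t = μ_{t−1} ∘ μ_{t−1}`. -/
noncomputable def iterateRec (n : ℕ) (μ : Measure (Cube n)) : ℕ → Measure (Cube n)
  | 0 => μ
  | t + 1 => collision n (iterateRec n μ t) (iterateRec n μ t)

/-!
Write `μ_{A_1} ⊗ … ⊗ μ_{A_N}` as the law `blockProd μ W` of `i ↦ p (W i) i`, where the `p k`
are independent `μ`-samples and `W : [n] → κ` labels the blocks (`|κ| = N`). Recombining the
block products of `U` and `V` along `A` gives the block product of the merged labelling
`A.piecewise (inl ∘ U) (inr ∘ V) : [n] → κ ⊕ κ`, and as `(A, U, V)` ranges over all triples every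
labelling by `κ ⊕ κ` is hit exactly `|κ|^n` times. So the collision product takes the uniform
mixture of block products over labellings by `κ` to the one over labellings by `κ ⊕ κ`, and
induction on `t` doubles `N = 2^t`.
-/

section BlockProd

variable {ι X : Type*} [MeasurableSpace X]

lemma measurable_blockSelect {κ : Type*} (W : ι → κ) :
    Measurable fun (p : κ → ι → X) i => p (W i) i := by
  fun_prop

variable (μ : Measure (ι → X))

/-- `μ_{A_1} ⊗ … ⊗ μ_{A_N}` for the blocks `A_k = W ⁻¹' {k}` of a labelling `W : ι → κ`. -/
noncomputable def blockProd {κ : Type*} [Fintype κ] (W : ι → κ) : Measure (ι → X) :=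
  (Measure.pi fun _ : κ => μ).map fun p i => p (W i) i

lemma blockProd_equiv_comp [SigmaFinite μ] {κ κ' : Type*} [Fintype κ] [Fintype κ'] (e : κ ≃ κ')
    (W : ι → κ) :
    blockProd μ (e ∘ W) = blockProd μ W := by
  rw [blockProd, ← (measurePreserving_piCongrLeft (fun _ : κ' => μ) e).map_eq,
    Measure.map_map (measurable_blockSelect _) (MeasurableEquiv.measurable _), blockProd]
  congr 1
  ext p i
  simp [MeasurableEquiv.piCongrLeft, Equiv.piCongrLeft_apply_apply]

lemma blockProd_of_unique {κ : Type*} [Unique κ] (W : ι → κ) : blockProd μ W = μ := by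
  have hselect : (fun (p : κ → ι → X) i => p (W i) i) = MeasurableEquiv.piUnique _ := by
    ext p i
    rw [Subsingleton.elim (W i) default]
    rfl
  rw [blockProd, hselect, (measurePreserving_piUnique fun _ : κ => μ).map_eq]

end BlockProd

section BlockMix

variable {ι X : Type*} [Fintype ι] [DecidableEq ι] [MeasurableSpace X] (μ : Measure (ι → X))

noncomputable def blockMix (κ : Type*) [Fintype κ] : Measure (ι → X) :=
  ((Fintype.card κ : ℝ≥0∞) ^ Fintype.card ι)⁻¹ • ∑ W : ι → κ, blockProd μ W

lemma blockMix_congr [SigmaFinite μ] {κ κ' : Type*} [Fintype κ] [Fintype κ'] (e : κ ≃ κ') :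
    blockMix μ κ = blockMix μ κ' := by
  rw [blockMix, blockMix, Fintype.card_congr e]
  congr 1
  exact Fintype.sum_equiv ((Equiv.refl ι).arrowCongr e) _ _
    fun W => (blockProd_equiv_comp μ e W).symm

lemma blockMix_of_unique (κ : Type*) [Unique κ] : blockMix μ κ = μ := by
  simp [blockMix, blockProd_of_unique]

end BlockMix

section Counting

/-- Merging two labellings along `A` forgets the labels of `V` on `A` and of `U` off `A`;
keeping these as a second labelling makes the merge a bijection. -/
def piecewiseSumEquiv (ι κ : Type*) [Fintype ι] [DecidableEq ι] :
    Finset ι × (ι → κ) × (ι → κ) ≃ (ι → κ ⊕ κ) × (ι → κ) where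
  toFun x := (x.1.piecewise (Sum.inl ∘ x.2.1) (Sum.inr ∘ x.2.2), x.1.piecewise x.2.2 x.2.1)
  invFun y := (Finset.univ.filter fun i => (y.1 i).isLeft,
    fun i => (y.1 i).elim id fun _ => y.2 i, fun i => (y.1 i).elim (fun _ => y.2 i) id)
  left_inv := by
    rintro ⟨A, U, V⟩
    ext i
    all_goals by_cases h : i ∈ A <;> simp [h]
  right_inv := by
    rintro ⟨W, R⟩
    ext i
    all_goals rcases h : W i with u | v <;> simp [h]

variable {ι κ : Type*} [Fintype ι] [DecidableEq ι] [Fintype κ]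

lemma sum_piecewise_inl_inr {M : Type*} [AddCommMonoid M] (f : (ι → κ ⊕ κ) → M) :
    ∑ A : Finset ι, ∑ p : (ι → κ) × (ι → κ), f (A.piecewise (Sum.inl ∘ p.1) (Sum.inr ∘ p.2))
      = (Fintype.card κ ^ Fintype.card ι) • ∑ W : ι → κ ⊕ κ, f W := by
  rw [← Fintype.sum_prod_type']
  refine (Fintype.sum_equiv (piecewiseSumEquiv ι κ) _ (fun y => f y.1) fun _ => rfl).trans ?_
  rw [Fintype.sum_prod_type]
  simp [Finset.smul_sum]

end Counting

section Recomb

variable {n : ℕ}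

lemma recomb_sum {ι ι' : Type*} [Fintype ι] [Fintype ι'] (A : Finset (Fin n))
    (m : ι → Measure (Cube n)) (m' : ι' → Measure (Cube n)) [∀ j, SFinite (m' j)] :
    recomb n A (∑ i, m i) (∑ j, m' j) = ∑ p : ι × ι', recomb n A (m p.1) (m' p.2) := by
  simp only [recomb, ← Measure.sum_fintype]
  rw [Measure.prod_sum, Measure.map_sum (measurable_of_countable _).aemeasurable]

lemma recomb_smul (A : Finset (Fin n)) (c d : ℝ≥0∞) (μ ν : Measure (Cube n)) [SFinite ν] :
    recomb n A (c • μ) (d • ν) = (c * d) • recomb n A μ ν := by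
  rw [recomb, Measure.prod_smul_left, Measure.prod_smul_right, smul_smul, Measure.map_smul,
    recomb]

variable (μ : Measure (Cube n)) [SigmaFinite μ]

lemma recomb_blockProd (A : Finset (Fin n)) {κ : Type*} [Fintype κ] (U V : Fin n → κ) :
    recomb n A (blockProd μ U) (blockProd μ V)
      = blockProd μ (A.piecewise (Sum.inl ∘ U) (Sum.inr ∘ V)) := by
  rw [recomb, blockProd, blockProd, blockProd,
    Measure.map_prod_map _ _ (measurable_blockSelect _) (measurable_blockSelect _),
    ← (measurePreserving_sumPiEquivProdPi fun _ : κ ⊕ κ => μ).map_eq,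
    Measure.map_map (measurable_of_countable _) (measurable_of_countable _),
    Measure.map_map (measurable_of_countable _) (MeasurableEquiv.measurable _)]
  congr 1
  ext p i
  by_cases h : i ∈ A <;> simp [h, MeasurableEquiv.coe_sumPiEquivProdPi, Equiv.sumPiEquivProdPi]

lemma collision_blockMix (κ : Type*) [Fintype κ] [Nonempty κ] :
    collision n (blockMix μ κ) (blockMix μ κ) = blockMix μ (κ ⊕ κ) := by
  simp only [collision, blockMix, Finset.smul_sum, recomb_sum, recomb_smul, recomb_blockProd]
  simp only [← Finset.smul_sum, sum_piecewise_inl_inr, Fintype.card_fin, Fintype.card_sum,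
    ← Nat.cast_smul_eq_nsmul ℝ≥0∞, smul_smul, Nat.cast_add, Nat.cast_pow]
  congr 1
  set k : ℝ≥0∞ := (Fintype.card κ : ℝ≥0∞)
  have hk : k ^ n ≠ 0 := pow_ne_zero _ (Nat.cast_ne_zero.2 Fintype.card_ne_zero)
  have hk' : k ^ n ≠ ⊤ := ENNReal.pow_ne_top (ENNReal.natCast_ne_top _)
  rw [mul_assoc, mul_assoc, ENNReal.inv_mul_cancel hk hk', mul_one, ← two_mul, mul_pow,
    ENNReal.mul_inv (Or.inr hk') (Or.inr hk)]

end Recomb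

lemma iterateRec_eq_blockMix {n : ℕ} (μ : Measure (Cube n)) [SigmaFinite μ] (t : ℕ) :
    iterateRec n μ t = blockMix μ (Fin (2 ^ t)) := by
  induction t with
  | zero => exact (blockMix_of_unique μ (Fin 1)).symm
  | succ t ih =>
    have hN : 2 ^ t + 2 ^ t = 2 ^ (t + 1) := by rw [pow_succ, mul_two]
    rw [iterateRec, ih, collision_blockMix, blockMix_congr μ (finSumFinEquiv.trans (finCongr hN))]

/-- `μ_t = N^{−n} Σ μ_{A_1} ⊗ … ⊗ μ_{A_N}` with `N = 2^t`, the sum running over all ordered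
partitions of `[n]` into `N` (possibly empty) blocks, encoded by labelings `U : [n] → [N]`. -/
theorem stmt_14 (n : ℕ) (μ : Measure (Cube n)) [IsProbabilityMeasure μ] (t : ℕ) :
    iterateRec n μ t
      = (((2 : ℝ≥0∞) ^ t) ^ n)⁻¹ •
          ∑ U : Fin n → Fin (2 ^ t),
            Measure.map (fun p : Fin (2 ^ t) → Cube n => fun i => p (U i) i)
              (Measure.pi fun _ => μ) := by
  rw [iterateRec_eq_blockMix, blockMix]
  simp only [blockProd, Fintype.card_fin, Nat.cast_pow, Nat.cast_ofNat]
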